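/- Let σ be a bicolourable chord diagram on ZMod (2n). Then every chord of σ joins an even element and an odd element of ZMod (2n), and for the alternating framing φ that takes x_∞ to be the even endpoint of each chord x, the intersection form equals the Rosenstiehl form of the interlace graph: for all distinct chords x, y, I_φ(x, y) = E(x, y) + card(N(x) ∩ N(y)) in ZMod 2, where N(x) is the set of chords interlaced with x. -/

import Mathlib

/-- The open cyclic arc `(a, b)` in `ZMod (2n)`: the points `a + s` with `0 < s < t`,
where `t = (b - a).val` is the representative of `b - a` in `[0, 2n)`. -/
def arc (n : ℕ) (a b : ZMod (2 * n)) : Set (ZMod (2 * n)) :=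
  {x | ∃ s : ℕ, 0 < s ∧ s < (b - a).val ∧ x = a + (s : ZMod (2 * n))}

/-- Two chords with endpoints `{x1, x2}` and `{y1, y2}` are interlaced iff exactly
one of `y1`, `y2` lies in the arc `(x1, x2)`. -/
def Interlaced (n : ℕ) (x1 x2 y1 y2 : ZMod (2 * n)) : Prop :=
  Xor' (y1 ∈ arc n x1 x2) (y2 ∈ arc n x1 x2)

/-- The number of chords of `σ` interlaced with the chord `{x, σ x}` (each such
chord has exactly one endpoint in the arc `(x, σ x)`). -/
noncomputable def interNbrCount (n : ℕ) (σ : Equiv.Perm (ZMod (2 * n)))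
    (x : ZMod (2 * n)) : ℕ :=
  ({a : ZMod (2 * n) | a ∈ arc n x (σ x) ∧ σ a ∉ arc n x (σ x)}).ncard

/-- The number of chords of `σ` interlaced with both the chord `{x, σ x}` and the
chord `{y, σ y}` (counted by their unique endpoint in the arc `(x, σ x)`). -/
noncomputable def commonNbrCount (n : ℕ) (σ : Equiv.Perm (ZMod (2 * n)))
    (x y : ZMod (2 * n)) : ℕ :=
  ({a : ZMod (2 * n) | a ∈ arc n x (σ x) ∧ σ a ∉ arc n x (σ x) ∧
      Interlaced n y (σ y) a (σ a)}).ncard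

open scoped Classical in
/-- The `∞`-endpoint of the chord through `i`, for the framing `S`. -/
noncomputable def inftyEnd {n : ℕ} (σ : Equiv.Perm (ZMod (2 * n)))
    (S : Set (ZMod (2 * n))) (i : ZMod (2 * n)) : ZMod (2 * n) :=
  if i ∈ S then i else σ i

open scoped Classical in
/-- The intersection form `I_φ` of the framed chord diagram `σ`, evaluated on the
chords whose `∞`-endpoints are `p` and `q` (so the ordered endpoint pairs are
`(p, σ p)` and `(q, σ q)`): it is `E(x,y)` plus the number of ordered pairs
`(a, σ a)` forming a chord with `a ∈ (p, σ p)` and `σ a ∈ (q, σ q)`, in `ZMod 2`. -/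
noncomputable def interForm (n : ℕ) (σ : Equiv.Perm (ZMod (2 * n)))
    (p q : ZMod (2 * n)) : ZMod 2 :=
  (if Interlaced n p (σ p) q (σ q) then 1 else 0) +
    (({a : ZMod (2 * n) | a ∈ arc n p (σ p) ∧ σ a ∈ arc n q (σ q)}).ncard : ZMod 2)

/-!
The points of the arc `(z, σ z)` are either paired by `σ` among themselves or are endpoints of
chords interlaced with `{z, σ z}`, of which there is an even number by bicolourability. So the arc
has even size, `σ z - z` is odd, and every chord joins points of opposite parity.

Let `A`, `B` be the arcs of the chords `x`, `y`, each running from its even endpoint to its odd one.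
For a chord `{a, σ a}`, modulo 2,
`[a ∈ A][σ a ∈ B] + [σ a ∈ A][a ∈ B] + [a ∈ A][a ∈ B] + [σ a ∈ A][σ a ∈ B]`
is the product of the indicators that the chord crosses the boundaries of `A` and of `B`, i.e. that
it is interlaced with `x` and with `y`. Summing over all chords expresses the count in `I_φ(x, y)`
as `|A ∩ B| + |N(x) ∩ N(y)|` modulo 2. An arc from an even to an odd point is a union of pairs
`{2k + 1, 2k + 2}`, so `|A ∩ B|` is even.
-/

theorem interlaced_comm_right {n : ℕ} {a b c d : ZMod (2 * n)} :
    Interlaced n a b c d ↔ Interlaced n a b d c :=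
  Iff.of_eq (xor_comm _ _)

section Arc

variable {n : ℕ} [NeZero (2 * n)]

theorem mem_arc_iff {a b x : ZMod (2 * n)} :
    x ∈ arc n a b ↔ 0 < (x - a).val ∧ (x - a).val < (b - a).val := by
  constructor
  · rintro ⟨s, hs0, hst, rfl⟩
    rw [add_sub_cancel_left, ZMod.val_cast_of_lt (hst.trans (ZMod.val_lt _))]
    exact ⟨hs0, hst⟩
  · rintro ⟨h0, ht⟩
    exact ⟨(x - a).val, h0, ht, by rw [ZMod.natCast_zmod_val, add_sub_cancel]⟩

theorem left_notMem_arc (a b : ZMod (2 * n)) : a ∉ arc n a b := by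
  simp [mem_arc_iff]

theorem right_notMem_arc (a b : ZMod (2 * n)) : b ∉ arc n a b := by
  simp [mem_arc_iff]

theorem ncard_arc (a b : ZMod (2 * n)) : (arc n a b).ncard = (b - a).val - 1 := by
  have himage : arc n a b = (fun s : ℕ => a + s) '' Set.Ioo 0 (b - a).val := by
    ext x
    simp only [arc, Set.mem_image, Set.mem_Ioo]
    constructor
    · rintro ⟨s, h0, ht, rfl⟩
      exact ⟨s, ⟨h0, ht⟩, rfl⟩
    · rintro ⟨s, ⟨h0, ht⟩, rfl⟩
      exact ⟨s, h0, ht, rfl⟩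
  have hinj : Set.InjOn (fun s : ℕ => a + s) (Set.Ioo 0 (b - a).val) := by
    intro s hs t ht hst
    have hlt : ∀ {r}, r ∈ Set.Ioo 0 (b - a).val → r < 2 * n := fun h => h.2.trans (ZMod.val_lt _)
    simpa [ZMod.val_cast_of_lt (hlt hs), ZMod.val_cast_of_lt (hlt ht)] using
      congrArg ZMod.val (add_left_cancel hst)
  rw [himage, hinj.ncard_image, Set.ncard_Ioo_nat, Nat.sub_zero]

theorem val_sub_swap {a b : ZMod (2 * n)} (hab : a ≠ b) : (a - b).val = 2 * n - (b - a).val := by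
  rw [← neg_sub, ZMod.neg_val, if_neg (sub_ne_zero.mpr hab.symm)]

theorem mem_arc_swap_iff {a b x : ZMod (2 * n)} (hab : a ≠ b) (hxa : x ≠ a) (hxb : x ≠ b) :
    x ∈ arc n b a ↔ x ∉ arc n a b := by
  have hxb_val : (x - b).val = ((x - a).val + (2 * n - (b - a).val)) % (2 * n) := by
    rw [← val_sub_swap hab, ← ZMod.val_add, sub_add_sub_cancel]
  rw [mem_arc_iff, mem_arc_iff, hxb_val, val_sub_swap hab]
  have hs := ZMod.val_lt (x - a)
  have ht := ZMod.val_lt (b - a)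
  have hs0 := (ZMod.val_ne_zero _).mpr (sub_ne_zero.mpr hxa)
  have ht0 := (ZMod.val_ne_zero _).mpr (sub_ne_zero.mpr hab.symm)
  have hst : (x - a).val ≠ (b - a).val := fun h => hxb (sub_left_inj.mp (ZMod.val_injective _ h))
  rcases Nat.lt_or_gt_of_ne hst with h | h
  · rw [Nat.mod_eq_of_lt (by omega)]
    omega
  · rw [Nat.mod_eq_sub_mod (by omega), Nat.mod_eq_of_lt (by omega)]
    omega

theorem interlaced_swap_left {a b c d : ZMod (2 * n)}
    (h : (c = a ∨ c = b) ↔ (d = a ∨ d = b)) :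
    Interlaced n b a c d ↔ Interlaced n a b c d := by
  rcases eq_or_ne a b with rfl | hab
  · rfl
  unfold Interlaced
  by_cases hc : c = a ∨ c = b
  · have hd := h.mp hc
    have hc' : c ∉ arc n a b ∧ c ∉ arc n b a := by
      rcases hc with rfl | rfl <;> simp [left_notMem_arc, right_notMem_arc]
    have hd' : d ∉ arc n a b ∧ d ∉ arc n b a := by
      rcases hd with rfl | rfl <;> simp [left_notMem_arc, right_notMem_arc]
    simp [hc', hd']
  · have hd : ¬(d = a ∨ d = b) := mt h.mpr hc
    push Not at hc hd
    rw [mem_arc_swap_iff hab hc.1 hc.2, mem_arc_swap_iff hab hd.1 hd.2]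
    exact xor_not_not

end Arc

def modTwo (n : ℕ) : ZMod (2 * n) →+* ZMod 2 := ZMod.castHom (dvd_mul_right 2 n) (ZMod 2)

section Parity

variable {n : ℕ} [NeZero (2 * n)]

theorem even_val_iff_modTwo_eq_zero (x : ZMod (2 * n)) : Even x.val ↔ modTwo n x = 0 := by
  rw [modTwo, ZMod.castHom_apply, ZMod.cast_eq_val, ZMod.natCast_eq_zero_iff_even]

theorem odd_val_iff_modTwo_eq_one (x : ZMod (2 * n)) : Odd x.val ↔ modTwo n x = 1 := by
  rw [← Nat.not_even_iff_odd, even_val_iff_modTwo_eq_zero]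
  generalize modTwo n x = y
  revert y
  decide

theorem even_val_add_one_iff (x : ZMod (2 * n)) : Even (x + 1).val ↔ ¬ Even x.val := by
  rw [even_val_iff_modTwo_eq_zero, even_val_iff_modTwo_eq_zero, map_add, map_one]
  generalize modTwo n x = y
  revert y
  decide

theorem even_val_sub_one_iff (x : ZMod (2 * n)) : Even (x - 1).val ↔ ¬ Even x.val := by
  rw [even_val_iff_modTwo_eq_zero, even_val_iff_modTwo_eq_zero, map_sub, map_one]
  generalize modTwo n x = y
  revert y
  decide

theorem even_val_sub_iff {x p : ZMod (2 * n)} (hp : Even p.val) :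
    Even (x - p).val ↔ Even x.val := by
  rw [even_val_iff_modTwo_eq_zero] at hp
  rw [even_val_iff_modTwo_eq_zero, even_val_iff_modTwo_eq_zero, map_sub, hp, sub_zero]

end Parity

theorem even_ncard_of_involutive_on {α : Type*} {S : Set α} (f : α → α)
    (hmem : ∀ a ∈ S, f a ∈ S) (hinv : ∀ a ∈ S, f (f a) = a) (hfix : ∀ a ∈ S, f a ≠ a) :
    Even S.ncard := by
  classical
  obtain hS | hS := S.finite_or_infinite
  · rw [Set.ncard_eq_toFinset_card S hS, ← ZMod.natCast_eq_zero_iff_even,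
      Finset.card_eq_sum_ones, Nat.cast_sum]
    exact Finset.sum_involution (fun a _ => f a) (fun _ _ => by decide)
      (fun a ha _ => hfix a (hS.mem_toFinset.mp ha))
      (fun a ha => hS.mem_toFinset.mpr (hmem a (hS.mem_toFinset.mp ha)))
      (fun a ha => hinv a (hS.mem_toFinset.mp ha))
  · rw [hS.ncard]
    exact ⟨0, rfl⟩

theorem Function.Involutive.eq_or_eq_iff_apply {α : Type*} {σ : α → α}
    (hσ : Function.Involutive σ) (a x : α) : (a = x ∨ a = σ x) ↔ (σ a = x ∨ σ a = σ x) := by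
  constructor
  · rintro (rfl | rfl)
    exacts [Or.inr rfl, Or.inl (hσ _)]
  · rintro (h | h)
    exacts [Or.inr (hσ.eq_iff.mp h), Or.inl (hσ.injective h)]

section Framing

variable {n : ℕ} {σ : Equiv.Perm (ZMod (2 * n))}

theorem even_val_inftyEnd {x : ZMod (2 * n)} (hx : Even x.val ↔ ¬ Even (σ x).val) :
    Even (inftyEnd σ {i | Even i.val} x).val := by
  unfold inftyEnd
  split_ifs with h
  · exact h
  · exact not_not.mp (mt hx.mpr h)

theorem interlaced_inftyEnd_right (hσ : Function.Involutive σ) (S : Set (ZMod (2 * n)))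
    (a b y : ZMod (2 * n)) :
    Interlaced n a b (inftyEnd σ S y) (σ (inftyEnd σ S y)) ↔ Interlaced n a b y (σ y) := by
  unfold inftyEnd
  split_ifs
  · rfl
  · rw [hσ y]
    exact interlaced_comm_right

end Framing

section Chord

variable {n : ℕ} [NeZero (2 * n)] {σ : Equiv.Perm (ZMod (2 * n))}

theorem odd_val_apply_sub (hσ : Function.Involutive σ) (hfix : ∀ i, σ i ≠ i) {z : ZMod (2 * n)}
    (hz : Even (interNbrCount n σ z)) : Odd (σ z - z).val := by
  set C := arc n z (σ z)
  have hinside : Even (C ∩ σ ⁻¹' C).ncard :=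
    even_ncard_of_involutive_on σ (fun a ha => ⟨ha.2, by simpa [hσ a] using ha.1⟩)
      (fun a _ => hσ a) (fun a _ => hfix a)
  have hsplit := Set.ncard_inter_add_ncard_sdiff_eq_ncard C (σ ⁻¹' C)
  rw [ncard_arc] at hsplit
  have hpos := (ZMod.val_ne_zero _).mpr (sub_ne_zero.mpr (hfix z))
  obtain ⟨k, hk⟩ := hinside
  obtain ⟨m, hm⟩ : Even (C \ σ ⁻¹' C).ncard := hz
  exact ⟨k + m, by omega⟩

theorem even_val_iff_not_even_val_apply (hσ : Function.Involutive σ) (hfix : ∀ i, σ i ≠ i)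
    {i : ZMod (2 * n)} (hi : Even (interNbrCount n σ i)) :
    Even i.val ↔ ¬ Even (σ i).val := by
  have h := (odd_val_iff_modTwo_eq_one _).mp (odd_val_apply_sub hσ hfix hi)
  rw [map_sub, sub_eq_iff_eq_add'] at h
  rw [even_val_iff_modTwo_eq_zero, even_val_iff_modTwo_eq_zero, h]
  generalize modTwo n i = y
  revert y
  decide

theorem interlaced_inftyEnd_left (hσ : Function.Involutive σ) (S : Set (ZMod (2 * n)))
    {x c d : ZMod (2 * n)} (hcd : (c = x ∨ c = σ x) ↔ (d = x ∨ d = σ x)) :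
    Interlaced n (inftyEnd σ S x) (σ (inftyEnd σ S x)) c d ↔ Interlaced n x (σ x) c d := by
  unfold inftyEnd
  split_ifs
  · rfl
  · rw [hσ x]
    exact interlaced_swap_left hcd

end Chord

section Partner

variable {n : ℕ} [NeZero (2 * n)]

/-- Swaps `2k + 1` and `2k + 2`; an arc from an even point to an odd point is a union of such
pairs. -/
def partner (z : ZMod (2 * n)) : ZMod (2 * n) := if Even z.val then z - 1 else z + 1

theorem even_val_partner_iff (z : ZMod (2 * n)) : Even (partner z).val ↔ ¬ Even z.val := by
  unfold partner
  split_ifs with h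
  · simp [even_val_sub_one_iff, h]
  · simp [even_val_add_one_iff, h]

theorem partner_partner (z : ZMod (2 * n)) : partner (partner z) = z := by
  have h := even_val_partner_iff z
  unfold partner at *
  split_ifs at * <;> first | (exfalso; tauto) | ring

theorem partner_ne (z : ZMod (2 * n)) : partner z ≠ z := fun h =>
  iff_not_self (h ▸ even_val_partner_iff z)

theorem partner_mem_arc {p p' z : ZMod (2 * n)} (hp : Even p.val) (hpp' : Odd (p' - p).val)
    (hz : z ∈ arc n p p') : partner z ∈ arc n p p' := by
  have hzp := even_val_sub_iff (x := z) hp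
  have hone : (1 : ZMod (2 * n)).val = 1 := by
    have := NeZero.ne (2 * n)
    rw [ZMod.val_one_eq_one_mod, Nat.mod_eq_of_lt (by omega)]
  have ht := ZMod.val_lt (p' - p)
  rw [mem_arc_iff] at hz ⊢
  rw [Nat.odd_iff] at hpp'
  unfold partner
  split_ifs with h
  · have := Nat.even_iff.mp (hzp.mpr h)
    rw [sub_right_comm, ZMod.val_sub (by omega)]
    omega
  · have := Nat.even_iff.not.mp (hzp.not.mpr h)
    rw [add_sub_right_comm, ZMod.val_add_of_lt (by omega)]
    omega

theorem even_ncard_arc_inter_arc {p p' q q' : ZMod (2 * n)} (hp : Even p.val)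
    (hpp' : Odd (p' - p).val) (hq : Even q.val) (hqq' : Odd (q' - q).val) :
    Even (arc n p p' ∩ arc n q q').ncard :=
  even_ncard_of_involutive_on partner
    (fun _ hz => ⟨partner_mem_arc hp hpp' hz.1, partner_mem_arc hq hqq' hz.2⟩)
    (fun z _ => partner_partner z) (fun z _ => partner_ne z)

end Partner

section Counting

variable {α : Type*} [Fintype α]

theorem natCast_ncard_eq_sum_ite (S : Set α) [DecidablePred (· ∈ S)] :
    (S.ncard : ZMod 2) = ∑ a, if a ∈ S then 1 else 0 := by
  rw [Finset.sum_boole, Set.ncard_eq_toFinset_card', Set.filter_mem_univ_eq_toFinset]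

theorem ite_and_eq_mul {R : Type*} [MulZeroOneClass R] (P Q : Prop) [Decidable P] [Decidable Q] :
    (if P ∧ Q then (1 : R) else 0) = (if P then 1 else 0) * (if Q then 1 else 0) := by
  rw [ite_zero_mul_ite_zero, mul_one]

theorem ite_not_eq_one_add (P : Prop) [Decidable P] :
    (if ¬P then (1 : ZMod 2) else 0) = 1 + if P then 1 else 0 := by
  split_ifs <;> decide

theorem ite_xor_eq_add (P Q : Prop) [Decidable P] [Decidable Q] [Decidable (Xor P Q)] :
    (if Xor P Q then (1 : ZMod 2) else 0) = (if P then 1 else 0) + (if Q then 1 else 0) := by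
  by_cases hP : P <;> by_cases hQ : Q <;> simp [hP, hQ]
  decide

theorem natCast_ncard_mem_and_apply_mem {σ : α → α} (hσ : Function.Involutive σ)
    (hfix : ∀ a, σ a ≠ a) {A B C : Set α}
    (hCA : ∀ a, Xor (a ∈ C) (σ a ∈ C) ↔ Xor (a ∈ A) (σ a ∈ A)) :
    ({a | a ∈ A ∧ σ a ∈ B}.ncard : ZMod 2) =
      (A ∩ B).ncard + {a | a ∈ C ∧ σ a ∉ C ∧ Xor (a ∈ B) (σ a ∈ B)}.ncard := by
  classical
  set F : α → ZMod 2 := fun a =>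
    (if a ∈ A ∧ σ a ∈ B then 1 else 0) + (if a ∈ A ∧ a ∈ B then 1 else 0) +
      (if a ∈ C ∧ σ a ∉ C ∧ Xor (a ∈ B) (σ a ∈ B) then 1 else 0) with hF
  have hchord : ∀ a, F a + F (σ a) = 0 := by
    intro a
    have hC : (if Xor (a ∈ C) (σ a ∈ C) then (1 : ZMod 2) else 0) =
        if Xor (a ∈ A) (σ a ∈ A) then 1 else 0 := if_congr (hCA a) rfl rfl
    simp only [hF, hσ a, xor_comm (σ a ∈ B)]
    simp only [ite_and_eq_mul, ite_not_eq_one_add, ite_xor_eq_add] at hC ⊢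
    -- mod 2, `F a + F (σ a)` is `(χ_A a + χ_A (σ a) + χ_C a + χ_C (σ a)) * (χ_B a + χ_B (σ a))`
    linear_combination (norm := ring_nf)
      ((if a ∈ B then 1 else 0) + (if σ a ∈ B then 1 else 0)) * hC
    reduce_mod_char
  have hsum : ∑ a, F a = 0 :=
    Finset.sum_ninvolution σ hchord (fun a _ => hfix a) (fun a => Finset.mem_univ _) hσ
  have hsplit : ∑ a, F a = ({a | a ∈ A ∧ σ a ∈ B}.ncard : ZMod 2) +
      ((A ∩ B).ncard + {a | a ∈ C ∧ σ a ∉ C ∧ Xor (a ∈ B) (σ a ∈ B)}.ncard) := by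
    simp only [natCast_ncard_eq_sum_ite, ← Finset.sum_add_distrib, hF, Set.mem_ofPred_eq,
      Set.mem_inter_iff, add_assoc]
  rw [hsum] at hsplit
  rw [eq_neg_of_add_eq_zero_left hsplit.symm, CharTwo.neg_eq]

end Counting

open scoped Classical in
/-- For a bicolourable chord diagram `σ` on `ZMod (2n)`: every chord joins an even
and an odd element, and, for the alternating framing whose `∞`-endpoints are the
even elements, the intersection form equals the Rosenstiehl form
`E(x,y) + card (N(x) ∩ N(y))` of the interlace graph. -/
theorem stmt18 (n : ℕ) (hn : 1 ≤ n) (σ : Equiv.Perm (ZMod (2 * n)))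
    (hinv : ∀ i, σ (σ i) = i) (hfix : ∀ i, σ i ≠ i)
    (hbic : ∀ x : ZMod (2 * n), Even (interNbrCount n σ x)) :
    (∀ i : ZMod (2 * n), Even i.val ↔ ¬ Even ((σ i).val)) ∧
    (∀ x y : ZMod (2 * n), y ≠ x → y ≠ σ x →
      interForm n σ (inftyEnd σ {i : ZMod (2 * n) | Even i.val} x)
          (inftyEnd σ {i : ZMod (2 * n) | Even i.val} y) =
        (if Interlaced n x (σ x) y (σ y) then 1 else 0) +
          (commonNbrCount n σ x y : ZMod 2)) := by
  have : NeZero (2 * n) := ⟨by omega⟩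
  have hpar (i : ZMod (2 * n)) : Even i.val ↔ ¬ Even (σ i).val :=
    even_val_iff_not_even_val_apply hinv hfix (hbic i)
  refine ⟨hpar, fun x y _ _ => ?_⟩
  set p := inftyEnd σ {i : ZMod (2 * n) | Even i.val} x
  set q := inftyEnd σ {i : ZMod (2 * n) | Even i.val} y
  have hchord := Function.Involutive.eq_or_eq_iff_apply hinv
  have hE : Interlaced n p (σ p) q (σ q) ↔ Interlaced n x (σ x) y (σ y) := by
    rw [interlaced_inftyEnd_left hinv _ (hchord q x), interlaced_inftyEnd_right hinv]
  have hcommon : commonNbrCount n σ x y = {a | a ∈ arc n x (σ x) ∧ σ a ∉ arc n x (σ x) ∧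
      Xor (a ∈ arc n q (σ q)) (σ a ∈ arc n q (σ q))}.ncard := by
    unfold commonNbrCount
    congr! 5 with a
    exact (interlaced_inftyEnd_left hinv _ (hchord a y)).symm
  have hinter : ((arc n p (σ p) ∩ arc n q (σ q)).ncard : ZMod 2) = 0 :=
    ZMod.natCast_eq_zero_iff_even.mpr <| even_ncard_arc_inter_arc
      (even_val_inftyEnd (hpar x)) (odd_val_apply_sub hinv hfix (hbic p))
      (even_val_inftyEnd (hpar y)) (odd_val_apply_sub hinv hfix (hbic q))
  rw [interForm, if_congr hE rfl rfl, natCast_ncard_mem_and_apply_mem hinv hfix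
    (C := arc n x (σ x)) (fun a => (interlaced_inftyEnd_left hinv _ (hchord a x)).symm),
    hinter, zero_add, hcommon]
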